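/- Let S be a finite set of size s ≥ 2 and let A ∈ S^{N×k} be an N×k array with entries in S. (1) If N = s² and k = α(s+1) + κ̃ with α a nonnegative integer and 0 ≤ κ̃ ≤ s, then Unb_{2,2}(A) ≥ α·κ̃·s²(s−1) + C(α,2)·s²(s²−1). (2) If N = 2s² and k = 2s + 1 + κ̃ with 1 ≤ κ̃ ≤ s, then Unb_{2,2}(A) ≥ 2s²((2κ̃ − 1)(s−1) − C(κ̃+1, 2)). Here C(·,·) denotes the binomial coefficient. -/
import Mathlib


open Finset

noncomputable section

instance {t k : ℕ} : DecidablePred (StrictMono : (Fin t → Fin k) → Prop) := fun f =>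
  decidable_of_iff (∀ a b : Fin t, a < b → f a < f b) Iff.rfl

/-- The number of rows of the array `A` whose restriction to the columns
`j 0, …, j (t-1)` equals the tuple `x`. -/
def rowCount {S : Type*} [DecidableEq S] {N k t : ℕ} (A : Fin N → Fin k → S)
    (x : Fin t → S) (j : Fin t → Fin k) : ℕ :=
  (Finset.univ.filter fun i : Fin N => ∀ r, A i (j r) = x r).card

/-- `A` is an orthogonal array with `s` levels and strength `t`. -/
def IsOA {S : Type*} [DecidableEq S] (s t : ℕ) {N k : ℕ} (A : Fin N → Fin k → S) : Prop :=
  ∀ (x : Fin t → S) (j : Fin t → Fin k), StrictMono j →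
    (rowCount A x j : ℝ) = (N : ℝ) / (s : ℝ) ^ t

/-- The `p`-unbalance of strength `t` of `A` (with `s` levels). -/
def Unb {S : Type*} [Fintype S] [DecidableEq S] (s : ℕ) (p : ℝ) (t : ℕ) {N k : ℕ}
    (A : Fin N → Fin k → S) : ℝ :=
  ∑ x : Fin t → S, ∑ j ∈ Finset.univ.filter (fun j : Fin t → Fin k => StrictMono j),
    |(rowCount A x j : ℝ) - (N : ℝ) / (s : ℝ) ^ t| ^ p

/-- The tolerance of strength `t` of `A` (with `s` levels). -/
def Tol {S : Type*} [DecidableEq S] (s t : ℕ) {N k : ℕ} (A : Fin N → Fin k → S) : ℝ :=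
  ⨆ (x : Fin t → S) (j : {j : Fin t → Fin k // StrictMono j}),
    |(rowCount A x j.1 : ℝ) - (N : ℝ) / (s : ℝ) ^ t|

/-- The Hamming similarity between the rows `r` and `r'` of `A`. -/
def Ham {S : Type*} [DecidableEq S] {N k : ℕ} (A : Fin N → Fin k → S) (r r' : Fin N) : ℕ :=
  (Finset.univ.filter fun j : Fin k => A r j = A r' j).card

/-- The matrix `X(A,f)`. -/
def Xmat {S : Type*} {N k : ℕ} (f : S → ℝ) (A : Fin N → Fin k → S) :
    Matrix (Fin N) (Fin k) ℝ :=
  Matrix.of fun i j => f (A i j) / Real.sqrt (∑ i' : Fin N, f (A i' j) ^ 2)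

/-- The absolute deviation of `f` with respect to the uniform measure. -/
def sigma1 {S : Type*} [Fintype S] (s : ℕ) (f : S → ℝ) : ℝ :=
  ⨅ α : ℝ, (∑ x : S, |f x - α|) / s

/-- The typical deviation of `f` with respect to the uniform measure. -/
def sigma2 {S : Type*} [Fintype S] (s : ℕ) (f : S → ℝ) : ℝ :=
  ⨅ α : ℝ, Real.sqrt ((∑ x : S, |f x - α| ^ 2) / s)
end

set_option linter.unusedSectionVars false

section Aux
lemma strictMono_fin2 {β : Type*} [Preorder β] {f : Fin 2 → β} (h : f 0 < f 1) : StrictMono f := by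
  intro a b hab
  have h2 : ∀ a b : Fin 2, a < b → a = 0 ∧ b = 1 := by decide
  obtain ⟨rfl, rfl⟩ := h2 a b hab
  exact h

lemma count_sm_pairs {k : ℕ} (E : Finset (Fin k)) :
    (univ.filter fun j : Fin 2 → Fin k => StrictMono j ∧ j 0 ∈ E ∧ j 1 ∈ E).card
      = E.card.choose 2 := by
  rw [← Finset.card_powersetCard]
  apply Finset.card_bij (fun j _ => ({j 0, j 1} : Finset (Fin k)))
  · intro j hj
    simp only [Finset.mem_filter, Finset.mem_univ, true_and] at hj
    obtain ⟨hsm, h0, h1⟩ := hj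
    have hlt : j 0 < j 1 := hsm (by decide : (0:Fin 2) < 1)
    rw [Finset.mem_powersetCard]
    constructor
    · intro a ha
      rcases Finset.mem_insert.mp ha with rfl | ha
      · exact h0
      · rw [Finset.mem_singleton] at ha; exact ha ▸ h1
    · rw [Finset.card_insert_of_notMem (by simp [hlt.ne]), Finset.card_singleton]
  · intro j hj j' hj' heq
    simp only [Finset.mem_filter, Finset.mem_univ, true_and] at hj hj'
    have h1 : j 0 < j 1 := hj.1 (by decide : (0:Fin 2) < 1)
    have h2 : j' 0 < j' 1 := hj'.1 (by decide : (0:Fin 2) < 1)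
    have m0 : j 0 ∈ ({j' 0, j' 1} : Finset (Fin k)) := heq ▸ (by simp)
    have m1 : j 1 ∈ ({j' 0, j' 1} : Finset (Fin k)) := heq ▸ (by simp)
    have m0' : j' 0 ∈ ({j 0, j 1} : Finset (Fin k)) := heq.symm ▸ (by simp)
    simp only [Finset.mem_insert, Finset.mem_singleton, Fin.ext_iff] at m0 m1 m0'
    rw [Fin.lt_def] at h1 h2
    have v0 : j 0 = j' 0 := Fin.ext (by omega)
    have v1 : j 1 = j' 1 := Fin.ext (by omega)
    have hfin : ∀ a : Fin 2, a = 0 ∨ a = 1 := by decide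
    funext a
    rcases hfin a with rfl | rfl
    exacts [v0, v1]
  · intro t ht
    rw [Finset.mem_powersetCard] at ht
    obtain ⟨hsub, hcard2⟩ := ht
    obtain ⟨a, b, hab, rfl⟩ := Finset.card_eq_two.mp hcard2
    have ha : a ∈ E := hsub (by simp)
    have hb : b ∈ E := hsub (by simp)
    rcases hab.lt_or_gt with hlt | hlt
    · refine ⟨fun r => if r = 0 then a else b, ?_, ?_⟩
      · simp only [Finset.mem_filter, Finset.mem_univ, true_and]
        refine ⟨strictMono_fin2 (by simp [hlt]), by simpa using ha, by simpa using hb⟩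
      · simp
    · refine ⟨fun r => if r = 0 then b else a, ?_, ?_⟩
      · simp only [Finset.mem_filter, Finset.mem_univ, true_and]
        refine ⟨strictMono_fin2 (by simp [hlt]), by simpa using hb, by simpa using ha⟩
      · simp [Finset.pair_comm]

lemma filter_card_sum {T : Type*} [Fintype T] [DecidableEq T] {N : ℕ} (g : Fin N → T) :
    ∑ x : T, (univ.filter fun i : Fin N => g i = x).card = N := by
  simp only [Finset.card_filter]
  rw [Finset.sum_comm]
  have h : ∀ i : Fin N, (∑ x : T, if g i = x then 1 else 0) = 1 := by
    intro i
    rw [Finset.sum_eq_single (g i)]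
    · simp
    · intro x _ hx; exact if_neg fun h => hx h.symm
    · simp
  simp [h]

lemma pair_count {T : Type*} [Fintype T] [DecidableEq T] {N : ℕ} (g : Fin N → T) :
    ∑ x : T, ((univ.filter fun i : Fin N => g i = x).card)^2
      = ∑ i : Fin N, ∑ i' : Fin N, if g i = g i' then 1 else 0 := by
  simp only [Finset.card_filter, sq, Finset.sum_mul_sum]
  rw [Finset.sum_comm]
  refine Finset.sum_congr rfl fun i _ => ?_
  rw [Finset.sum_comm]
  refine Finset.sum_congr rfl fun i' _ => ?_
  by_cases h : g i = g i'
  · rw [if_pos h, Finset.sum_eq_single (g i)]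
    · rw [if_pos rfl, if_pos h.symm, one_mul]
    · intro x _ hx
      rw [if_neg fun hh => hx hh.symm, zero_mul]
    · simp
  · rw [if_neg h]
    apply Finset.sum_eq_zero
    intro x _
    by_cases h1 : g i = x
    · rw [if_pos h1, if_neg fun h2 => h (h1.trans h2.symm), mul_zero]
    · rw [if_neg h1, zero_mul]

variable {S : Type*} [Fintype S] [DecidableEq S] {N k : ℕ}

lemma rowCount_eq (A : Fin N → Fin k → S) {t : ℕ} (x : Fin t → S) (j : Fin t → Fin k) :
    rowCount A x j = (univ.filter fun i : Fin N => (fun r => A i (j r)) = x).card := by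
  unfold rowCount
  congr 1
  apply Finset.filter_congr
  intro i _
  simp [funext_iff]

lemma sum_rowCount (A : Fin N → Fin k → S) {t : ℕ} (j : Fin t → Fin k) :
    ∑ x : Fin t → S, rowCount A x j = N := by
  rw [Finset.sum_congr rfl (fun x _ => rowCount_eq A x j)]
  exact filter_card_sum _

lemma sm_agree_count (A : Fin N → Fin k → S) (i i' : Fin N) :
    ∑ j ∈ univ.filter (fun j : Fin 2 → Fin k => StrictMono j),
        (if ∀ r, A i (j r) = A i' (j r) then 1 else 0)
      = (Ham A i i').choose 2 := by
  rw [← Finset.card_filter, Finset.filter_filter]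
  have h : (univ.filter fun j : Fin 2 → Fin k =>
        StrictMono j ∧ ∀ r, A i (j r) = A i' (j r))
      = univ.filter fun j : Fin 2 → Fin k => StrictMono j ∧
          j 0 ∈ (univ.filter fun c : Fin k => A i c = A i' c) ∧
          j 1 ∈ (univ.filter fun c : Fin k => A i c = A i' c) := by
    apply Finset.filter_congr
    intro j _
    simp [Fin.forall_fin_two]
  rw [h, count_sm_pairs]
  rfl

lemma main_count (A : Fin N → Fin k → S) :
    ∑ j ∈ univ.filter (fun j : Fin 2 → Fin k => StrictMono j),
        ∑ x : Fin 2 → S, (rowCount A x j)^2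
      = ∑ i : Fin N, ∑ i' : Fin N, (Ham A i i').choose 2 := by
  have step1 : ∀ j : Fin 2 → Fin k, ∑ x : Fin 2 → S, (rowCount A x j)^2
      = ∑ i : Fin N, ∑ i' : Fin N, (if ∀ r, A i (j r) = A i' (j r) then 1 else 0) := by
    intro j
    rw [Finset.sum_congr rfl (fun x _ => by rw [rowCount_eq A x j]),
      pair_count (fun i => fun r => A i (j r))]
    refine Finset.sum_congr rfl fun i _ => Finset.sum_congr rfl fun i' _ => ?_
    exact if_congr (by simp [funext_iff]) rfl rfl
  rw [Finset.sum_congr rfl (fun j _ => step1 j), Finset.sum_comm]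
  refine Finset.sum_congr rfl fun i _ => ?_
  rw [Finset.sum_comm]
  exact Finset.sum_congr rfl fun i' _ => sm_agree_count A i i'

lemma card_sm : (univ.filter fun j : Fin 2 → Fin k => StrictMono j).card = k.choose 2 := by
  have := count_sm_pairs (univ : Finset (Fin k))
  simpa using this

lemma ham_diag (A : Fin N → Fin k → S) (i : Fin N) : Ham A i i = k := by
  simp [Ham]

lemma ham_total (A : Fin N → Fin k → S) :
    ∑ i : Fin N, ∑ i' : Fin N, Ham A i i'
      = ∑ col : Fin k, ∑ x : S, ((univ.filter fun i : Fin N => A i col = x).card)^2 := by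
  simp only [Ham, Finset.card_filter]
  calc ∑ i : Fin N, ∑ i' : Fin N, ∑ col : Fin k, (if A i col = A i' col then 1 else 0)
      = ∑ i : Fin N, ∑ col : Fin k, ∑ i' : Fin N, (if A i col = A i' col then 1 else 0) :=
        Finset.sum_congr rfl fun i _ => Finset.sum_comm
    _ = ∑ col : Fin k, ∑ i : Fin N, ∑ i' : Fin N, (if A i col = A i' col then 1 else 0) :=
        Finset.sum_comm
    _ = ∑ col : Fin k, ∑ x : S, ((univ.filter fun i : Fin N => A i col = x).card)^2 :=
        Finset.sum_congr rfl fun col _ => (pair_count (fun i => A i col)).symm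
    _ = ∑ col : Fin k, ∑ x : S, (∑ i : Fin N, if A i col = x then 1 else 0)^2 := by
        simp only [Finset.card_filter]

lemma choose_two_lb (c h : ℕ) :
    (c:ℝ)*(h:ℝ) - (c:ℝ)*((c:ℝ)+1)/2 ≤ (h.choose 2 : ℝ) := by
  rw [Nat.cast_choose_two]
  rcases le_or_gt h c with hc | hc
  · have h1 : (h:ℝ) ≤ (c:ℝ) := by exact_mod_cast hc
    nlinarith [mul_nonneg (sub_nonneg.2 h1) (by linarith : (0:ℝ) ≤ (c:ℝ)+1-(h:ℝ))]
  · have h1 : (c:ℝ) + 1 ≤ (h:ℝ) := by exact_mod_cast hc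
    nlinarith [mul_nonneg (by linarith : (0:ℝ) ≤ (h:ℝ)-(c:ℝ)) (by linarith : (0:ℝ) ≤ (h:ℝ)-(c:ℝ)-1)]

lemma split_diag {N : ℕ} (f : Fin N → Fin N → ℝ) :
    ∑ i : Fin N, ∑ i' : Fin N, f i i'
      = (∑ i : Fin N, ∑ i' ∈ univ \ {i}, f i i') + ∑ i : Fin N, f i i := by
  rw [← Finset.sum_add_distrib]
  exact Finset.sum_congr rfl fun i _ =>
    Finset.sum_eq_sum_sdiff_singleton_add (Finset.mem_univ i) _

lemma key_bound {S : Type*} [Fintype S] [DecidableEq S] {s N k : ℕ} (hs : 0 < s)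
    (hcard : Fintype.card S = s) (A : Fin N → Fin k → S) (c : ℕ) :
    (c:ℝ) * ((k:ℝ)*(N:ℝ)^2/(s:ℝ) - (N:ℝ)*(k:ℝ)) - (N:ℝ)*((N:ℝ)-1)*((c:ℝ)*((c:ℝ)+1)/2)
      + ((N:ℝ) - (N:ℝ)^2/(s:ℝ)^2) * ((k:ℝ)*((k:ℝ)-1)/2) ≤ Unb s 2 2 A := by
  have hs0 : (s:ℝ) ≠ 0 := Nat.cast_ne_zero.2 hs.ne'
  have unb_nonneg : 0 ≤ Unb s 2 2 A :=
    Finset.sum_nonneg fun x _ => Finset.sum_nonneg fun j _ =>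
      Real.rpow_nonneg (abs_nonneg _) 2
  rcases Nat.eq_zero_or_pos N with hN0 | hN1
  · subst hN0
    simp only [Nat.cast_zero]
    norm_num
    linarith [unb_nonneg]
  -- main case
  have hUnb : Unb s 2 2 A = ∑ j ∈ univ.filter (fun j : Fin 2 → Fin k => StrictMono j),
      ∑ x : Fin 2 → S, ((rowCount A x j : ℝ) - (N:ℝ)/(s:ℝ)^2)^2 := by
    rw [Unb, Finset.sum_comm]
    refine Finset.sum_congr rfl fun j _ => Finset.sum_congr rfl fun x _ => ?_
    rw [show ((2:ℝ)) = ((2:ℕ):ℝ) by norm_num, Real.rpow_natCast, sq_abs]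
  have hcard2 : ((Fintype.card (Fin 2 → S) : ℕ) : ℝ) = (s:ℝ)^2 := by
    rw [Fintype.card_fun, hcard]
    simp
  have hexp : ∀ j : Fin 2 → Fin k,
      ∑ x : Fin 2 → S, ((rowCount A x j : ℝ) - (N:ℝ)/(s:ℝ)^2)^2
        = (∑ x : Fin 2 → S, ((rowCount A x j:ℝ))^2) - (N:ℝ)^2/(s:ℝ)^2 := by
    intro j
    have h1 : ∑ x : Fin 2 → S, ((rowCount A x j : ℝ)) = (N:ℝ) := by
      exact_mod_cast congrArg (Nat.cast : ℕ → ℝ) (sum_rowCount A j)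
    have expand : ∀ a : ℝ, (a - (N:ℝ)/(s:ℝ)^2)^2
        = a^2 - 2*((N:ℝ)/(s:ℝ)^2)*a + ((N:ℝ)/(s:ℝ)^2)^2 := fun a => by ring
    rw [Finset.sum_congr rfl fun x _ => expand _]
    rw [Finset.sum_add_distrib, Finset.sum_sub_distrib, ← Finset.mul_sum, h1,
      Finset.sum_const, Finset.card_univ, nsmul_eq_mul, hcard2]
    field_simp
    ring
  have hmain : (∑ j ∈ univ.filter (fun j : Fin 2 → Fin k => StrictMono j),
      ∑ x : Fin 2 → S, ((rowCount A x j:ℝ))^2)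
        = ∑ i : Fin N, ∑ i' : Fin N, ((Ham A i i').choose 2 : ℝ) := by
    exact_mod_cast congrArg (Nat.cast : ℕ → ℝ) (main_count A)
  have hUnb2 : Unb s 2 2 A
      = (∑ i : Fin N, ∑ i' : Fin N, ((Ham A i i').choose 2 : ℝ))
        - ((k.choose 2 : ℕ):ℝ) * ((N:ℝ)^2/(s:ℝ)^2) := by
    rw [hUnb, Finset.sum_congr rfl (fun j _ => hexp j), Finset.sum_sub_distrib, hmain,
      Finset.sum_const, card_sm, nsmul_eq_mul]
  have hdiagC : ∑ i : Fin N, ((Ham A i i).choose 2 : ℝ) = (N:ℝ)*((k.choose 2:ℕ):ℝ) := by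
    rw [Finset.sum_congr rfl (fun i _ => by rw [ham_diag]), Finset.sum_const,
      Finset.card_univ, Fintype.card_fin, nsmul_eq_mul]
  have hdiagH : ∑ i : Fin N, (Ham A i i : ℝ) = (N:ℝ)*(k:ℝ) := by
    rw [Finset.sum_congr rfl (fun i _ => by rw [ham_diag]), Finset.sum_const,
      Finset.card_univ, Fintype.card_fin, nsmul_eq_mul]
  have hCS : (k:ℝ)*(N:ℝ)^2/(s:ℝ) ≤ ∑ i : Fin N, ∑ i' : Fin N, (Ham A i i' : ℝ) := by
    have hq : ∑ i : Fin N, ∑ i' : Fin N, (Ham A i i' : ℝ)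
        = ∑ col : Fin k, ∑ x : S,
            (((univ.filter fun i : Fin N => A i col = x).card : ℝ))^2 := by
      exact_mod_cast congrArg (Nat.cast : ℕ → ℝ) (ham_total A)
    rw [hq]
    have hcol : ∀ col : Fin k, (N:ℝ)^2/(s:ℝ)
        ≤ ∑ x : S, (((univ.filter fun i : Fin N => A i col = x).card : ℝ))^2 := by
      intro col
      have h1 : ∑ x : S, (((univ.filter fun i : Fin N => A i col = x).card : ℝ)) = (N:ℝ) := by
        exact_mod_cast congrArg (Nat.cast : ℕ → ℝ) (filter_card_sum (fun i => A i col))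
      have h2 := sq_sum_le_card_mul_sum_sq (s := (univ : Finset S))
        (f := fun x => (((univ.filter fun i : Fin N => A i col = x).card : ℝ)))
      rw [h1, Finset.card_univ, hcard] at h2
      rw [div_le_iff₀ (by exact_mod_cast hs)]
      linarith [h2]
    calc (k:ℝ)*(N:ℝ)^2/(s:ℝ) = ∑ _col : Fin k, (N:ℝ)^2/(s:ℝ) := by
          rw [Finset.sum_const, Finset.card_univ, Fintype.card_fin, nsmul_eq_mul]; ring
      _ ≤ _ := Finset.sum_le_sum fun col _ => hcol col
  -- split sums into diagonal and off-diagonal parts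
  have hsplitC := split_diag (fun i i' => ((Ham A i i').choose 2 : ℝ))
  have hsplitH := split_diag (fun i i' => (Ham A i i' : ℝ))
  -- bound the off-diagonal choose sum
  have hconst : ∀ i : Fin N, ∑ _i' ∈ univ \ {i}, ((c:ℝ)*((c:ℝ)+1)/2)
      = ((N:ℝ)-1) * ((c:ℝ)*((c:ℝ)+1)/2) := by
    intro i
    rw [Finset.sum_const, nsmul_eq_mul]
    congr 1
    rw [Finset.card_sdiff_of_subset (by simp), Finset.card_univ, Fintype.card_fin,
      Finset.card_singleton, Nat.cast_sub hN1, Nat.cast_one]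
  have hsum_off : (∑ i : Fin N, ∑ i' ∈ univ \ {i},
        ((c:ℝ)*(Ham A i i':ℝ) - (c:ℝ)*((c:ℝ)+1)/2))
      ≤ ∑ i : Fin N, ∑ i' ∈ univ \ {i}, ((Ham A i i').choose 2 : ℝ) :=
    Finset.sum_le_sum fun i _ => Finset.sum_le_sum fun i' _ => choose_two_lb c _
  have hoff_eq : (∑ i : Fin N, ∑ i' ∈ univ \ {i},
        ((c:ℝ)*(Ham A i i':ℝ) - (c:ℝ)*((c:ℝ)+1)/2))
      = (c:ℝ) * (∑ i : Fin N, ∑ i' ∈ univ \ {i}, (Ham A i i':ℝ))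
        - (N:ℝ)*((N:ℝ)-1)*((c:ℝ)*((c:ℝ)+1)/2) := by
    simp only [Finset.sum_sub_distrib]
    rw [Finset.sum_congr rfl (fun i _ => hconst i), Finset.sum_const, Finset.card_univ,
      Fintype.card_fin, nsmul_eq_mul, Finset.mul_sum]
    congr 1
    · exact Finset.sum_congr rfl fun i _ => (Finset.mul_sum _ _ _).symm
    · ring
  have hc0 : (0:ℝ) ≤ (c:ℝ) := Nat.cast_nonneg c
  have hoffH_lb : (k:ℝ)*(N:ℝ)^2/(s:ℝ) - (N:ℝ)*(k:ℝ)
      ≤ ∑ i : Fin N, ∑ i' ∈ univ \ {i}, (Ham A i i':ℝ) := by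
    have := hsplitH
    rw [hdiagH] at this
    linarith [hCS]
  have hstep : (c:ℝ) * ((k:ℝ)*(N:ℝ)^2/(s:ℝ) - (N:ℝ)*(k:ℝ))
      ≤ (c:ℝ) * (∑ i : Fin N, ∑ i' ∈ univ \ {i}, (Ham A i i':ℝ)) :=
    mul_le_mul_of_nonneg_left hoffH_lb hc0
  have hC2k : ((k.choose 2 : ℕ):ℝ) = (k:ℝ)*((k:ℝ)-1)/2 := Nat.cast_choose_two (K := ℝ) k
  rw [hUnb2, hsplitC, hdiagC, hC2k]
  linarith [hsum_off, hoff_eq, hstep]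

end Aux


/-- Specializations of the `2`-unbalance lower bound: for index `λ = 1` (i.e. `N = s²`)
with `k = α(s+1)+κ̃`, `0 ≤ κ̃ ≤ s`; and for index `λ = 2` (i.e. `N = 2s²`) with
`k = 2s+1+κ̃`, `1 ≤ κ̃ ≤ s`. -/
theorem statement4 {S : Type*} [Fintype S] [DecidableEq S] {s : ℕ} (hs : 2 ≤ s)
    (hcard : Fintype.card S = s) :
    (∀ (N k α κ : ℕ) (A : Fin N → Fin k → S), N = s ^ 2 → k = α * (s + 1) + κ → κ ≤ s →
        (α : ℝ) * (κ : ℝ) * (s : ℝ) ^ 2 * ((s : ℝ) - 1) +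
            (α.choose 2 : ℝ) * (s : ℝ) ^ 2 * ((s : ℝ) ^ 2 - 1)
          ≤ Unb s 2 2 A) ∧
    (∀ (N k κ : ℕ) (A : Fin N → Fin k → S), N = 2 * s ^ 2 → k = 2 * s + 1 + κ →
        1 ≤ κ → κ ≤ s →
        2 * (s : ℝ) ^ 2 * ((2 * (κ : ℝ) - 1) * ((s : ℝ) - 1) - ((κ + 1).choose 2 : ℝ))
          ≤ Unb s 2 2 A) := by
  have hs0 : 0 < s := by omega
  have hsr : (s:ℝ) ≠ 0 := Nat.cast_ne_zero.2 (by omega)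
  constructor
  · intro N k α κ A hN hk hκ
    have hb := key_bound hs0 hcard A α
    subst hN hk
    refine le_trans (le_of_eq ?_) hb
    rw [Nat.cast_choose_two (K := ℝ) α]
    push_cast
    field_simp
    ring
  · intro N k κ A hN hk hκ1 hκ2
    have hb := key_bound hs0 hcard A 2
    subst hN hk
    refine le_trans (le_of_eq ?_) hb
    rw [Nat.cast_choose_two (K := ℝ) (κ+1)]
    push_cast
    field_simp
    ring
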